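/- The total number of partitions of the vertex set of a forest with n vertices and c components into non-empty independent sets (the Bell number of the forest) equals Σ_{i≥0} C(c-1, i) B_{n-1-i}, where B_m is the m-th Bell number. -/

import Mathlib

open Finset SimpleGraph Polynomial

/-- Stirling numbers of the second kind. -/
def stirling2 : ℕ → ℕ → ℕ
  | 0, 0 => 1
  | 0, _ + 1 => 0
  | _ + 1, 0 => 0
  | n + 1, k + 1 => (k + 1) * stirling2 n (k + 1) + stirling2 n k

/-- Bell numbers. -/
def bell (n : ℕ) : ℕ := ∑ k ∈ Finset.range (n + 1), stirling2 n k

/-- `graphStirling G k` is the number of partitions of the vertex set of `G`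
into exactly `k` non-empty independent sets. -/
noncomputable def graphStirling {V : Type} [Fintype V] [DecidableEq V] (G : SimpleGraph V) (k : ℕ) : ℕ :=
  Nat.card {P : Finpartition (Finset.univ : Finset V) //
    P.parts.card = k ∧ ∀ p ∈ P.parts, ∀ u ∈ p, ∀ v ∈ p, ¬ G.Adj u v}

/-- The number of proper colorings of `G` with `x` colors
(the chromatic polynomial evaluated at `x`). -/
noncomputable def chromaticCount {V : Type} [Fintype V] (G : SimpleGraph V) (x : ℕ) : ℕ :=
  Nat.card {f : V → Fin x // ∀ u v, G.Adj u v → f u ≠ f v}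

/-!
Call a partition of the vertex set into independent sets an independent partition. If `uv` is an
edge of `G`, the independent partitions of `G - uv` are those of `G` together with those in which
`u` and `v` share a block, and when `v` is a leaf at `u` the latter are, after discarding `v`, the
independent partitions of `G - v`. For a forest with `n` vertices and `c` components, `G - uv` has
`n` vertices and `c + 1` components and `G - v` has `n - 1` vertices and `c` components, while
`f n c = ∑ i < c, C(c - 1, i) B (n - 1 - i)` satisfies `f n (c + 1) = f n c + f (n - 1) c` by
Pascal's rule. Induction on `n - c` thus reduces the claim to edgeless graphs, where `f n n = B n`
is the recurrence of the Bell numbers.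
-/

theorem stirling2_eq_stirlingSecond (n k : ℕ) : stirling2 n k = Nat.stirlingSecond n k := by
  induction n generalizing k with
  | zero => cases k <;> rfl
  | succ n ih => cases k <;> simp [stirling2, Nat.stirlingSecond_succ_succ, ih]

theorem stirlingSecond_succ_succ_eq_sum_choose (n k : ℕ) :
    Nat.stirlingSecond (n + 1) (k + 1) =
      ∑ j ∈ range (n + 1), n.choose j * Nat.stirlingSecond j k := by
  induction n generalizing k with
  | zero => cases k <;> simp [Nat.stirlingSecond_succ_succ]
  | succ n ih =>
    have shifted : ∑ j ∈ range (n + 1), n.choose j * Nat.stirlingSecond (j + 1) k =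
        k * Nat.stirlingSecond (n + 1) (k + 1) + Nat.stirlingSecond (n + 1) k := by
      cases k with
      | zero => simp
      | succ k =>
        have (j : ℕ) : n.choose j * Nat.stirlingSecond (j + 1) (k + 1) =
            (k + 1) * (n.choose j * Nat.stirlingSecond j (k + 1)) +
              n.choose j * Nat.stirlingSecond j k := by
          rw [Nat.stirlingSecond_succ_succ]; ring
        simp only [this, Finset.sum_add_distrib, ← Finset.mul_sum, ← ih]
    have unshifted : ∑ j ∈ range (n + 1), n.choose (j + 1) * Nat.stirlingSecond (j + 1) k +
        Nat.stirlingSecond 0 k = Nat.stirlingSecond (n + 1) (k + 1) := by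
      rw [ih, Finset.sum_range_succ' (fun j => n.choose j * Nat.stirlingSecond j k),
        Finset.sum_range_succ (fun j => n.choose (j + 1) * Nat.stirlingSecond (j + 1) k)]
      simp
    rw [Finset.sum_range_succ']
    simp only [Nat.choose_succ_succ', add_mul, Finset.sum_add_distrib, Nat.choose_zero_right,
      one_mul]
    rw [shifted, add_assoc (k * _ + _), unshifted, Nat.stirlingSecond_succ_succ (n + 1)]
    ring

theorem bell_eq_sum_stirlingSecond {m n : ℕ} (h : n ≤ m) :
    bell n = ∑ k ∈ range (m + 1), Nat.stirlingSecond n k := by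
  rw [bell]
  simp only [stirling2_eq_stirlingSecond]
  refine Finset.sum_subset (Finset.range_subset_range.2 (by omega)) fun k _ hk => ?_
  exact Nat.stirlingSecond_eq_zero_of_lt (by simp at hk; omega)

theorem bell_eq_natBell (n : ℕ) : bell n = Nat.bell n := by
  induction n using Nat.strong_induction_on with
  | _ n ih =>
  cases n with
  | zero => simp [bell, stirling2]
  | succ n =>
    calc bell (n + 1)
        = ∑ k ∈ range (n + 1), Nat.stirlingSecond (n + 1) (k + 1) := by
          rw [bell_eq_sum_stirlingSecond le_rfl, Finset.sum_range_succ']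
          simp
      _ = ∑ j ∈ range (n + 1), n.choose j * bell j := by
          simp only [stirlingSecond_succ_succ_eq_sum_choose, Finset.sum_comm (γ := ℕ),
            ← Finset.mul_sum]
          refine Finset.sum_congr rfl fun j hj => ?_
          rw [bell_eq_sum_stirlingSecond (m := n) (by simp at hj; omega)]
      _ = ∑ i ∈ range (n + 1), n.choose i * Nat.bell (n - i) := by
          rw [← Finset.sum_range_reflect]
          refine Finset.sum_congr rfl fun i hi => ?_
          simp only [Finset.mem_range] at hi
          rw [ih _ (by omega), ← Nat.choose_symm (by omega : i ≤ n)]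
          congr 2
      _ = Nat.bell (n + 1) := by rw [Nat.bell_succ, Nat.range_succ_eq_Iic]

theorem Nat.card_eq_sum_card_fiberwise {X M : Type} [Finite X] [DecidableEq M] (f : X → M)
    (t : Finset M) (hf : ∀ x, f x ∈ t) :
    Nat.card X = ∑ b ∈ t, Nat.card {x // f x = b} := by
  have := Fintype.ofFinite X
  simp only [Nat.card_eq_fintype_card, Fintype.card_subtype]
  exact Finset.card_eq_sum_card_fiberwise fun x _ => hf x

instance Setoid.finite {V : Type} [Finite V] : Finite (Setoid V) :=
  Finite.of_injective (fun s : Setoid V => s.r) fun _ _ h =>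
    Setoid.ext fun a b => iff_of_eq (congr_fun₂ h a b)

open scoped Classical in
noncomputable def setoidWithClassEquiv {V : Type} {B : Finset V} {v : V} (hv : v ∈ B) :
    {s : Setoid V // ∀ x, s v x ↔ x ∈ B} ≃ Setoid {x // x ∉ B} where
  toFun s := s.1.comap Subtype.val
  invFun t := ⟨Setoid.ker fun x => if h : x ∈ B then none else some (Quotient.mk t ⟨x, h⟩),
    fun x => by by_cases hx : x ∈ B <;> simp [Setoid.ker_def, hv, hx]⟩
  left_inv := by
    rintro ⟨s, hs⟩
    ext a b
    have hB : ∀ x, x ∈ B ↔ s v x := fun x => (hs x).symm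
    by_cases ha : a ∈ B <;> by_cases hb : b ∈ B <;>
      simp only [Setoid.ker_def, ha, hb, dite_true, dite_false, reduceCtorEq, Option.some.injEq,
        Quotient.eq, Setoid.comap_rel, true_iff, false_iff] <;> rw [hB] at ha hb
    · exact s.trans (s.symm ha) hb
    · exact fun hab => hb (s.trans ha hab)
    · exact fun hab => ha (s.trans hb (s.symm hab))
  right_inv t := by
    ext a b
    simp [Setoid.ker_def, a.2, b.2, Quotient.eq]

theorem Nat.card_setoid (V : Type) [Finite V] : Nat.card (Setoid V) = Nat.bell (Nat.card V) := by
  classical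
  induction hn : Nat.card V using Nat.strong_induction_on generalizing V with
  | _ n ih =>
  have := Fintype.ofFinite V
  cases n with
  | zero =>
    have : IsEmpty V := Finite.card_eq_zero_iff.1 hn
    have : Subsingleton (Setoid V) := ⟨fun s t => Setoid.ext fun a => isEmptyElim a⟩
    simp [Nat.card_unique]
  | succ n =>
    obtain ⟨v⟩ : Nonempty V := Nat.card_pos_iff.1 (by omega) |>.1
    have hclass (s : Setoid V) : (univ.erase v).filter (s v ·) ∈ (univ.erase v).powerset :=
      Finset.mem_powerset.2 (Finset.filter_subset _ _)
    have hfiber (A : Finset V) (hA : A ∈ (univ.erase v).powerset) :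
        Nat.card {s : Setoid V // (univ.erase v).filter (s v ·) = A} = Nat.bell (n - #A) := by
      have hvA : v ∉ A := fun h => by simpa using Finset.mem_powerset.1 hA h
      have e : {s : Setoid V // (univ.erase v).filter (s v ·) = A} ≃
          {s : Setoid V // ∀ x, s v x ↔ x ∈ insert v A} :=
        Equiv.subtypeEquivRight fun s => by
          rw [Finset.ext_iff]
          refine forall_congr' fun x => ?_
          by_cases hx : x = v
          · subst hx; simp [hvA]
          · simp [hx]
      rw [Nat.card_congr (e.trans (setoidWithClassEquiv (Finset.mem_insert_self v A))),
        ih (n - #A) (by omega) _ ?_]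
      rw [Nat.card_eq_fintype_card, Fintype.card_subtype_compl, Fintype.card_coe,
        Finset.card_insert_of_notMem hvA, ← Nat.card_eq_fintype_card, hn]
      omega
    rw [Nat.card_eq_sum_card_fiberwise _ _ hclass, Finset.sum_congr rfl hfiber,
      Finset.sum_powerset_apply_card (fun m => Nat.bell (n - m)),
      Finset.card_erase_of_mem (Finset.mem_univ v), Finset.card_univ, ← Nat.card_eq_fintype_card,
      hn, Nat.bell_succ, Nat.range_succ_eq_Iic]
    simp

section Finpartition
variable {V : Type} [Fintype V] [DecidableEq V]

lemma Finpartition.parts_eq_image_part (P : Finpartition (univ : Finset V)) :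
    P.parts = univ.image P.part := by
  ext t
  simp only [Finset.mem_image, Finset.mem_univ, true_and]
  refine ⟨fun ht => ?_, ?_⟩
  · obtain ⟨a, ha⟩ := P.nonempty_of_mem_parts ht
    exact ⟨a, P.part_eq_of_mem ht ha⟩
  · rintro ⟨a, rfl⟩
    simp

noncomputable def finpartitionEquivSetoid : Finpartition (univ : Finset V) ≃ Setoid V where
  toFun P := Setoid.ker P.part
  invFun s := @Finpartition.ofSetoid _ _ _ s (Classical.decRel _)
  left_inv P := by
    ext1
    unfold Finpartition.ofSetoid
    rw [Finpartition.ofSetSetoid_parts, P.parts_eq_image_part]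
    congr! with a
    ext b
    simp only [Finset.mem_filter, Finset.mem_univ, true_and, Setoid.ker_def]
    rw [P.mem_part_iff_part_eq_part (mem_univ b) (mem_univ a), eq_comm]
  right_inv s := by
    ext a b
    simp [Setoid.ker_def, ← Finpartition.mem_part_iff_part_eq_part,
      Finpartition.mem_part_ofSetoid_iff_rel, Setoid.comm' s]

end Finpartition

def forestBell (n c : ℕ) : ℕ := ∑ i ∈ range c, (c - 1).choose i * Nat.bell (n - 1 - i)

lemma forestBell_self {n : ℕ} (hn : n ≠ 0) : forestBell n n = Nat.bell n := by
  obtain ⟨m, rfl⟩ := Nat.exists_eq_succ_of_ne_zero hn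
  simp [forestBell, Nat.bell_succ, Nat.range_succ_eq_Iic]

lemma sum_range_choose_succ_mul (d : ℕ) (f : ℕ → ℕ) :
    ∑ i ∈ range (d + 2), (d + 1).choose i * f i =
      ∑ i ∈ range (d + 1), d.choose i * f i + ∑ i ∈ range (d + 1), d.choose i * f (i + 1) := by
  rw [Finset.sum_range_succ' (fun i => (d + 1).choose i * f i)]
  simp only [Nat.choose_succ_succ', add_mul, Finset.sum_add_distrib]
  rw [Finset.sum_range_succ (fun i => d.choose (i + 1) * f (i + 1)),
    Finset.sum_range_succ' (fun i => d.choose i * f i), Nat.choose_succ_self]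
  simp only [Nat.choose_zero_right, zero_mul, add_zero]
  ring

lemma forestBell_succ {n c : ℕ} (hc : c ≠ 0) :
    forestBell n (c + 1) = forestBell n c + forestBell (n - 1) c := by
  obtain ⟨d, rfl⟩ := Nat.exists_eq_succ_of_ne_zero hc
  have hshift (i : ℕ) : n - 1 - 1 - i = n - 1 - (i + 1) := by omega
  simp only [forestBell, Nat.succ_sub_one, hshift]
  exact sum_range_choose_succ_mul d _

namespace SimpleGraph

def indepSetoids {V : Type} (G : SimpleGraph V) : Set (Setoid V) :=
  {s | ∀ a b, G.Adj a b → ¬ s a b}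

section Finpartition
variable {V : Type} [Fintype V] [DecidableEq V]

lemma ker_part_mem_indepSetoids_iff (G : SimpleGraph V)
    (P : Finpartition (univ : Finset V)) :
    Setoid.ker P.part ∈ G.indepSetoids ↔ ∀ p ∈ P.parts, ∀ u ∈ p, ∀ v ∈ p, ¬ G.Adj u v := by
  simp only [indepSetoids, Set.mem_ofPred_eq, Setoid.ker_def]
  refine ⟨fun h p hp u hu v hv huv => h u v huv ?_, fun h u v huv hp => ?_⟩
  · rw [P.part_eq_of_mem hp hu, P.part_eq_of_mem hp hv]
  · exact h _ (P.part_mem.2 (mem_univ u)) u (P.mem_part (mem_univ u)) v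
      (hp ▸ P.mem_part (mem_univ v)) huv

lemma sum_graphStirling_eq_card_indepSetoids (G : SimpleGraph V) :
    ∑ k ∈ range (Fintype.card V + 1), graphStirling G k = Nat.card G.indepSetoids := by
  let X := {P : Finpartition (univ : Finset V) // ∀ p ∈ P.parts, ∀ u ∈ p, ∀ v ∈ p, ¬ G.Adj u v}
  have hfiber (k : ℕ) : graphStirling G k = Nat.card {P : X // #P.1.parts = k} :=
    Nat.card_congr <| (Equiv.subtypeEquivRight fun _ => and_comm).trans
      (Equiv.subtypeSubtypeEquivSubtypeInter _ _).symm
  have hparts (P : X) : #P.1.parts ∈ range (Fintype.card V + 1) :=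
    Finset.mem_range_succ_iff.2 (P.1.card_parts_le_card.trans_eq Finset.card_univ)
  rw [Finset.sum_congr rfl fun k _ => hfiber k, ← Nat.card_eq_sum_card_fiberwise _ _ hparts]
  exact Nat.card_congr <| finpartitionEquivSetoid.subtypeEquiv fun P =>
    (G.ker_part_mem_indepSetoids_iff P).symm

end Finpartition

section Leaf
variable {V : Type} {G : SimpleGraph V} {u v : V}

open scoped Classical in
noncomputable def retractCompl (huv : u ≠ v) (x : V) : ({v}ᶜ : Set V) :=
  if h : x = v then ⟨u, huv⟩ else ⟨x, h⟩

@[simp] lemma retractCompl_self (huv : u ≠ v) : retractCompl huv v = ⟨u, huv⟩ := dif_pos rfl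

@[simp] lemma retractCompl_of_ne (huv : u ≠ v) {x : V} (hx : x ≠ v) :
    retractCompl huv x = ⟨x, hx⟩ := dif_neg hx

@[simp] lemma retractCompl_coe (huv : u ≠ v) (x : ({v}ᶜ : Set V)) :
    retractCompl huv x = x := retractCompl_of_ne huv x.2

lemma retractCompl_reachable (huv : u ≠ v) (hv : ∀ w, G.Adj v w → w = u) {x y : V}
    (p : G.Walk x y) : (G.induce {v}ᶜ).Reachable (retractCompl huv x) (retractCompl huv y) := by
  induction p with
  | nil => rfl
  | @cons x z y h _ ih =>
    refine Reachable.trans ?_ ih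
    by_cases hx : x = v
    · subst hx; simp [hv z h, huv]
    by_cases hz : z = v
    · subst hz; simp [hv x h.symm, huv]
    rw [retractCompl_of_ne huv hx, retractCompl_of_ne huv hz]
    exact Adj.reachable h

lemma injective_map_induce_compl (huv : u ≠ v) (hv : ∀ w, G.Adj v w → w = u) :
    Function.Injective (ConnectedComponent.map (Embedding.induce (G := G) {v}ᶜ).toHom) := by
  refine ConnectedComponent.ind₂ fun a b hab => ConnectedComponent.sound ?_
  obtain ⟨p⟩ := ConnectedComponent.exact hab
  simpa using retractCompl_reachable huv hv p

lemma card_connectedComponent_induce_compl_of_adj (huv : G.Adj u v)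
    (hv : ∀ w, G.Adj v w → w = u) :
    Nat.card (G.induce {v}ᶜ).ConnectedComponent = Nat.card G.ConnectedComponent := by
  refine Nat.card_eq_of_bijective _ ⟨injective_map_induce_compl huv.ne hv, ?_⟩
  refine ConnectedComponent.ind fun x => ?_
  by_cases hx : x = v
  · subst hx
    exact ⟨(G.induce {x}ᶜ).connectedComponentMk ⟨u, huv.ne⟩,
      ConnectedComponent.sound huv.reachable⟩
  · exact ⟨(G.induce {v}ᶜ).connectedComponentMk ⟨x, hx⟩, rfl⟩

lemma eq_of_reachable_of_isolated (hv : ∀ w, ¬ G.Adj v w) {x : V} (h : G.Reachable v x) :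
    x = v := by
  obtain ⟨p⟩ := h
  cases p with
  | nil => rfl
  | cons h _ => exact (hv _ h).elim

lemma card_connectedComponent_eq_add_one_of_isolated [Finite V] (hv : ∀ w, ¬ G.Adj v w) :
    Nat.card G.ConnectedComponent = Nat.card (G.induce {v}ᶜ).ConnectedComponent + 1 := by
  classical
  let f : (G.induce {v}ᶜ).ConnectedComponent → {c // c ≠ G.connectedComponentMk v} :=
    fun c => ⟨c.map (Embedding.induce (G := G) {v}ᶜ).toHom, c.ind fun x hxv =>
      x.2 (eq_of_reachable_of_isolated hv (ConnectedComponent.exact hxv).symm)⟩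
  have hf : Function.Bijective f := by
    constructor
    · intro c₁ c₂ h
      induction c₁ using ConnectedComponent.ind with
      | h a => exact injective_map_induce_compl a.2 (fun w h => (hv w h).elim) congr($h.1)
    · rintro ⟨c, hc⟩
      induction c using ConnectedComponent.ind with
      | h x =>
        have hx : x ≠ v := by rintro rfl; exact hc rfl
        exact ⟨(G.induce {v}ᶜ).connectedComponentMk ⟨x, hx⟩, rfl⟩
  rw [← Nat.card_congr (Equiv.optionSubtypeNe (G.connectedComponentMk v)), Finite.card_option,
    Nat.card_congr (Equiv.ofBijective f hf)]
end Leaf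

section DeletionContraction
variable {V : Type} {G : SimpleGraph V} {u v : V}

lemma indepSetoids_eq_diff_of_adj (huv : G.Adj u v) :
    G.indepSetoids = (G.deleteEdges {s(u, v)}).indepSetoids \ {s | s u v} := by
  ext s
  simp only [indepSetoids, Set.mem_sdiff, Set.mem_ofPred_eq, deleteEdges_adj,
    Set.mem_singleton_iff]
  refine ⟨fun h => ⟨fun a b hab => h a b hab.1, h u v huv⟩, fun ⟨h, huv'⟩ a b hab hs => ?_⟩
  by_cases he : s(a, b) = s(u, v)
  · rcases Sym2.eq_iff.1 he with ⟨rfl, rfl⟩ | ⟨rfl, rfl⟩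
    exacts [huv' hs, huv' (s.symm hs)]
  · exact h a b ⟨hab, he⟩ hs

noncomputable def indepSetoidsMergeEquiv (huv : u ≠ v) (hv : ∀ w, ¬ G.Adj v w) :
    ↥(G.indepSetoids ∩ {s | s u v}) ≃ (G.induce {v}ᶜ).indepSetoids where
  toFun s := ⟨s.1.comap Subtype.val, fun a b hab => s.2.1 a b hab⟩
  invFun t := ⟨t.1.comap (retractCompl huv), fun a b hab => by
      have ha : a ≠ v := by rintro rfl; exact hv b hab
      have hb : b ≠ v := by rintro rfl; exact hv a hab.symm
      simpa [Setoid.comap_rel, ha, hb] using t.2 ⟨a, ha⟩ ⟨b, hb⟩ hab,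
    by simp [Setoid.comap_rel, huv]⟩
  left_inv s := by
    have hsr (x : V) : s.1 x (retractCompl huv x) := by
      by_cases hx : x = v
      · subst hx; simpa using s.1.symm s.2.2
      · simp [hx]
    ext a b
    simp only [Setoid.comap_rel]
    exact ⟨fun h => s.1.trans (hsr a) (s.1.trans h (s.1.symm (hsr b))),
      fun h => s.1.trans (s.1.symm (hsr a)) (s.1.trans h (hsr b))⟩
  right_inv t := by
    ext a b
    simp [Setoid.comap_rel]

lemma isolated_deleteEdges_of_leaf (hv : ∀ w, G.Adj v w → w = u) :
    ∀ w, ¬ (G.deleteEdges {s(u, v)}).Adj v w := by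
  intro w h
  rw [deleteEdges_adj, hv w h.1] at h
  exact h.2 Sym2.eq_swap

lemma induce_compl_deleteEdges :
    (G.deleteEdges {s(u, v)}).induce {v}ᶜ = G.induce {v}ᶜ := by
  ext a b
  simp only [comap_adj, Function.Embedding.coe_subtype, deleteEdges_adj, Set.mem_singleton_iff,
    and_iff_left_iff_imp]
  intro _ he
  rcases Sym2.eq_iff.1 he with ⟨_, h⟩ | ⟨h, _⟩
  exacts [b.2 h, a.2 h]

theorem card_indepSetoids_deleteEdges_of_leaf [Finite V] (huv : G.Adj u v)
    (hv : ∀ w, G.Adj v w → w = u) :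
    Nat.card (G.deleteEdges {s(u, v)}).indepSetoids =
      Nat.card G.indepSetoids + Nat.card (G.induce {v}ᶜ).indepSetoids := by
  rw [← induce_compl_deleteEdges (u := u), ← Nat.card_congr (indepSetoidsMergeEquiv huv.ne
    (isolated_deleteEdges_of_leaf hv)), indepSetoids_eq_diff_of_adj huv]
  simp only [Nat.card_coe_set_eq]
  rw [add_comm, Set.ncard_inter_add_ncard_sdiff_eq_ncard _ _ (Set.toFinite _)]

end DeletionContraction

theorem IsAcyclic.exists_leaf {V : Type} [Finite V] {G : SimpleGraph V}
    (hG : G.IsAcyclic) {a b : V} (hab : G.Adj a b) :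
    ∃ u v, G.Adj u v ∧ ∀ w, G.Adj v w → w = u := by
  have : Nonempty V := ⟨a⟩
  obtain ⟨x, y, p, hp, hmax⟩ := Walk.exists_isPath_forall_isPath_length_le_length G
  have hnil : ¬ p.Nil := fun h => by
    simpa [h.length_eq_zero] using hmax a b _ (Path.singleton hab).2
  refine ⟨p.snd, x, (p.adj_snd hnil).symm, fun w hw => hG.eq_snd_of_adj_start hp hw ?_⟩
  by_contra hwp
  have := hmax _ _ _ (hp.cons hwp (h := hw.symm))
  simp at this

section Forest
variable {V : Type}

lemma card_connectedComponent_le_card [Finite V] (G : SimpleGraph V) :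
    Nat.card G.ConnectedComponent ≤ Nat.card V :=
  Nat.card_le_card_of_surjective _ Quot.mk_surjective

lemma card_connectedComponent_bot :
    Nat.card (⊥ : SimpleGraph V).ConnectedComponent = Nat.card V :=
  (Nat.card_eq_of_bijective _ ⟨fun _ _ h => reachable_bot.1 (ConnectedComponent.exact h),
    Quot.mk_surjective⟩).symm

lemma card_indepSetoids_bot [Finite V] :
    Nat.card (⊥ : SimpleGraph V).indepSetoids = Nat.bell (Nat.card V) := by
  have : (⊥ : SimpleGraph V).indepSetoids = Set.univ := by
    ext s
    simp [indepSetoids]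
  rw [this, Nat.card_univ, Nat.card_setoid]

theorem IsAcyclic.card_indepSetoids [Finite V] [Nonempty V] {G : SimpleGraph V}
    (hG : G.IsAcyclic) :
    Nat.card G.indepSetoids = forestBell (Nat.card V) (Nat.card G.ConnectedComponent) := by
  induction hk : Nat.card V - Nat.card G.ConnectedComponent using Nat.strong_induction_on
    generalizing V with
  | _ k ih =>
  by_cases hE : ∃ a b, G.Adj a b
  swap
  · obtain rfl : G = ⊥ := by ext a b; simpa using fun h => hE ⟨a, b, h⟩
    rw [card_indepSetoids_bot, card_connectedComponent_bot, forestBell_self Nat.card_pos.ne']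
  obtain ⟨a, b, hab⟩ := hE
  obtain ⟨u, v, huv, hv⟩ := hG.exists_leaf hab
  have hcH : Nat.card (G.induce {v}ᶜ).ConnectedComponent = Nat.card G.ConnectedComponent :=
    card_connectedComponent_induce_compl_of_adj huv hv
  have hcK : Nat.card (G.deleteEdges {s(u, v)}).ConnectedComponent =
      Nat.card G.ConnectedComponent + 1 := by
    rw [card_connectedComponent_eq_add_one_of_isolated (isolated_deleteEdges_of_leaf hv),
      induce_compl_deleteEdges, hcH]
  have hnH : Nat.card ({v}ᶜ : Set V) = Nat.card V - 1 := by
    rw [Nat.card_coe_set_eq, Set.ncard_compl, Set.ncard_singleton]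
  have hcle := (G.induce {v}ᶜ).card_connectedComponent_le_card
  have : Nonempty ({v}ᶜ : Set V) := ⟨⟨u, huv.ne⟩⟩
  have hn : Nat.card V ≠ 0 := Nat.card_pos.ne'
  have hK := ih (Nat.card V - Nat.card (G.deleteEdges {s(u, v)}).ConnectedComponent)
    (by omega) (hG.anti (deleteEdges_le _)) rfl
  have hH := ih (Nat.card ({v}ᶜ : Set V) - Nat.card (G.induce {v}ᶜ).ConnectedComponent)
    (by omega) (hG.induce _) rfl
  rw [hcK, forestBell_succ Nat.card_pos.ne'] at hK
  rw [hnH, hcH] at hH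
  have := card_indepSetoids_deleteEdges_of_leaf huv hv
  omega

end Forest

end SimpleGraph

theorem forest_bell_number_general {V : Type} [Fintype V] [DecidableEq V]
    (G : SimpleGraph V) (hG : G.IsAcyclic) (n c : ℕ)
    (hn : Fintype.card V = n) (hc : Nat.card G.ConnectedComponent = c)
    (hc1 : 1 ≤ c) :
    ∑ k ∈ Finset.range (n + 1), graphStirling G k =
      ∑ i ∈ Finset.range c, Nat.choose (c - 1) i * bell (n - 1 - i) := by
  subst hn hc
  obtain ⟨C⟩ := (Nat.card_pos_iff.1 hc1).1
  have : Nonempty V := ⟨C.out⟩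
  rw [G.sum_graphStirling_eq_card_indepSetoids, hG.card_indepSetoids, forestBell,
    ← Nat.card_eq_fintype_card]
  simp only [bell_eq_natBell]

theorem forest_bell_number {V : Type} [Fintype V] [DecidableEq V]
    (G : SimpleGraph V) (hG : G.IsAcyclic) (n c : ℕ)
    (hn : Fintype.card V = n) (hc : Nat.card G.ConnectedComponent = c)
    (hc1 : 1 ≤ c) (hcn : c ≤ n) :
    ∑ k ∈ Finset.range (n + 1), graphStirling G k =
      ∑ i ∈ Finset.range c, Nat.choose (c - 1) i * bell (n - 1 - i) :=
  forest_bell_number_general G hG n c hn hc hc1
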